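/- arXiv:2509.18013 — 2 statements merged into one kernel-verified Lean document; each statement's English description precedes it below -/
import Mathlib

section
/- Let (M,d) be a Hadamard space and Y a random variable taking values in M with E[d(Y,p)^2] < ∞ for some (hence all) p ∈ M. Then the Fréchet mean, i.e., the minimizer of ω ↦ E[d(Y,ω)^2], exists and is unique. -/
open MeasureTheory

/-- In a Hadamard space, the Fréchet mean of a square-integrable random variable
exists and is unique. -/
theorem frechet_mean_exists_unique {M : Type*} [MetricSpace M] [CompleteSpace M]
    [MeasurableSpace M] [BorelSpace M]
    (hNPC : ∀ ω1 ω2 : M, ∃ α : M, ∀ β : M,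
      dist β α ^ 2 ≤ (1 / 2) * dist β ω1 ^ 2 + (1 / 2) * dist β ω2 ^ 2
        - (1 / 4) * dist ω1 ω2 ^ 2)
    {Ω : Type*} [MeasurableSpace Ω] (μ : Measure Ω) [IsProbabilityMeasure μ]
    (Y : Ω → M) (hY : Measurable Y) (p : M)
    (hint : Integrable (fun ω => dist (Y ω) p ^ 2) μ) :
    ∃! m : M, ∀ w : M,
      (∫ ω, dist (Y ω) m ^ 2 ∂μ) ≤ ∫ ω, dist (Y ω) w ^ 2 ∂μ := by
  classical
  set F : M → ℝ := fun w => ∫ ω, dist (Y ω) w ^ 2 ∂μ with hFdef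
  have hmeas : ∀ w : M, Measurable fun ω => dist (Y ω) w ^ 2 := fun w =>
    (((continuous_id.dist continuous_const).pow 2).measurable).comp hY
  have hint' : ∀ w : M, Integrable (fun ω => dist (Y ω) w ^ 2) μ := by
    intro w
    refine ((hint.const_mul 2).add (integrable_const (2 * dist p w ^ 2))).mono'
      (hmeas w).aestronglyMeasurable ?_
    filter_upwards with ω
    have h1 := dist_triangle (Y ω) p w
    rw [Real.norm_eq_abs, abs_of_nonneg (by positivity)]
    show dist (Y ω) w ^ 2 ≤ 2 * dist (Y ω) p ^ 2 + 2 * dist p w ^ 2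
    nlinarith [dist_nonneg (x := Y ω) (y := p), dist_nonneg (x := p) (y := w),
      dist_nonneg (x := Y ω) (y := w), sq_nonneg (dist (Y ω) p - dist p w)]
  have hF0 : ∀ w, 0 ≤ F w := fun w => integral_nonneg fun ω => by positivity
  have hbdd : BddBelow (Set.range F) := ⟨0, by rintro _ ⟨w, rfl⟩; exact hF0 w⟩
  set V := sInf (Set.range F) with hVdef
  have hVle : ∀ w, V ≤ F w := fun w => csInf_le hbdd ⟨w, rfl⟩
  -- integrated NPC inequality
  have hnpcF : ∀ w1 w2 : M, ∃ α : M,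
      F α ≤ (1 / 2) * F w1 + (1 / 2) * F w2 - (1 / 4) * dist w1 w2 ^ 2 := by
    intro w1 w2
    obtain ⟨α, hα⟩ := hNPC w1 w2
    refine ⟨α, ?_⟩
    have hi1 : Integrable (fun ω =>
        (1 / 2) * dist (Y ω) w1 ^ 2 + (1 / 2) * dist (Y ω) w2 ^ 2) μ :=
      ((hint' w1).const_mul _).add ((hint' w2).const_mul _)
    have hle : F α ≤ ∫ ω, ((1 / 2) * dist (Y ω) w1 ^ 2 + (1 / 2) * dist (Y ω) w2 ^ 2
        - (1 / 4) * dist w1 w2 ^ 2) ∂μ := by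
      apply integral_mono (hint' α) (hi1.sub (integrable_const _))
      exact fun ω => hα (Y ω)
    have heq : ∫ ω, ((1 / 2) * dist (Y ω) w1 ^ 2 + (1 / 2) * dist (Y ω) w2 ^ 2
        - (1 / 4) * dist w1 w2 ^ 2) ∂μ
        = (1 / 2) * F w1 + (1 / 2) * F w2 - (1 / 4) * dist w1 w2 ^ 2 := by
      rw [integral_sub hi1 (integrable_const _),
        integral_add ((hint' w1).const_mul _) ((hint' w2).const_mul _),
        integral_const_mul, integral_const_mul, integral_const, probReal_univ]
      simp [hFdef]
    rw [heq] at hle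
    exact hle
  -- minimizing sequence
  have hne : (Set.range F).Nonempty := ⟨F p, p, rfl⟩
  have hseq : ∀ n : ℕ, ∃ w : M, F w < V + 1 / ((n : ℝ) + 1) := by
    intro n
    have hlt : V < V + 1 / ((n : ℝ) + 1) := lt_add_of_pos_right _ (by positivity)
    obtain ⟨x, ⟨w, rfl⟩, hx2⟩ := exists_lt_of_csInf_lt hne hlt
    exact ⟨w, hx2⟩
  choose w hw using hseq
  have hd2 : ∀ n k : ℕ, dist (w n) (w k) ^ 2 ≤ 2 / ((n : ℝ) + 1) + 2 / ((k : ℝ) + 1) := by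
    intro n k
    obtain ⟨α, hα⟩ := hnpcF (w n) (w k)
    have h1 := hVle α
    have h2 := hw n
    have h3 := hw k
    have e1 : (2 : ℝ) / ((n : ℝ) + 1) = 2 * (1 / ((n : ℝ) + 1)) := by ring
    have e2 : (2 : ℝ) / ((k : ℝ) + 1) = 2 * (1 / ((k : ℝ) + 1)) := by ring
    rw [e1, e2]
    linarith
  have hcauchy : CauchySeq w := by
    rw [Metric.cauchySeq_iff']
    intro ε hε
    obtain ⟨N, hN⟩ := exists_nat_gt (4 / ε ^ 2)
    refine ⟨N, fun n hn => ?_⟩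
    have h1 : dist (w n) (w N) ^ 2 ≤ 2 / ((n : ℝ) + 1) + 2 / ((N : ℝ) + 1) := hd2 n N
    have h2 : (2 : ℝ) / ((n : ℝ) + 1) ≤ 2 / ((N : ℝ) + 1) := by
      gcongr
    have h3 : (4 : ℝ) / ((N : ℝ) + 1) < ε ^ 2 := by
      rw [div_lt_iff₀ (by positivity)]
      have h4 : 4 / ε ^ 2 < (N : ℝ) := hN
      rw [div_lt_iff₀ (by positivity)] at h4
      nlinarith [sq_nonneg ε]
    have e3 : (4 : ℝ) / ((N : ℝ) + 1) = 2 / ((N : ℝ) + 1) + 2 / ((N : ℝ) + 1) := by ring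
    have h6 : dist (w n) (w N) ^ 2 < ε ^ 2 := by
      rw [e3] at h3; linarith
    exact lt_of_pow_lt_pow_left₀ 2 hε.le h6
  obtain ⟨m, hm⟩ := cauchySeq_tendsto_of_complete hcauchy
  -- F (w n) → V
  have hFwV : Filter.Tendsto (fun n => F (w n)) Filter.atTop (nhds V) := by
    have h1 : Filter.Tendsto (fun n : ℕ => V + 1 / ((n : ℝ) + 1)) Filter.atTop (nhds V) := by
      have := tendsto_one_div_add_atTop_nhds_zero_nat (𝕜 := ℝ)
      simpa using Filter.Tendsto.add (tendsto_const_nhds (x := V)) this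
    exact tendsto_of_tendsto_of_tendsto_of_le_of_le tendsto_const_nhds h1
      (fun n => hVle (w n)) (fun n => (hw n).le)
  -- F (w n) → F m by dominated convergence
  have hdistbd : BddAbove (Set.range fun n => dist (w n) m) := by
    have : Filter.Tendsto (fun n => dist (w n) m) Filter.atTop (nhds 0) := by
      rwa [tendsto_iff_dist_tendsto_zero] at hm
    exact this.bddAbove_range
  obtain ⟨C, hC⟩ := hdistbd
  have hC' : ∀ n, dist (w n) m ≤ C := fun n => hC ⟨n, rfl⟩
  have hC0 : 0 ≤ C := le_trans dist_nonneg (hC' 0)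
  have hFwFm : Filter.Tendsto (fun n => F (w n)) Filter.atTop (nhds (F m)) := by
    apply tendsto_integral_of_dominated_convergence
      (fun ω => 2 * dist (Y ω) m ^ 2 + 2 * C ^ 2)
    · exact fun n => (hmeas (w n)).aestronglyMeasurable
    · exact ((hint' m).const_mul 2).add (integrable_const _)
    · intro n
      filter_upwards with ω
      rw [Real.norm_eq_abs, abs_of_nonneg (by positivity)]
      have h1 := dist_triangle (Y ω) m (w n)
      have h2 : dist m (w n) ≤ C := by rw [dist_comm]; exact hC' n
      show dist (Y ω) (w n) ^ 2 ≤ 2 * dist (Y ω) m ^ 2 + 2 * C ^ 2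
      nlinarith [dist_nonneg (x := Y ω) (y := m), dist_nonneg (x := m) (y := w n),
        dist_nonneg (x := Y ω) (y := w n),
        sq_nonneg (dist (Y ω) m - dist m (w n)),
        mul_self_le_mul_self (dist_nonneg (x := m) (y := w n)) h2]
    · filter_upwards with ω
      exact (Filter.Tendsto.dist tendsto_const_nhds hm).pow 2
  have hFmV : F m = V := tendsto_nhds_unique hFwFm hFwV
  refine ⟨m, fun w' => ?_, fun y hy => ?_⟩
  · show F m ≤ F w'
    calc F m = V := hFmV
    _ ≤ F w' := hVle w'
  · -- uniqueness
    have hym : F y ≤ F m := hy m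
    have hFyV : F y = V := le_antisymm (hym.trans (le_of_eq hFmV)) (hVle y)
    obtain ⟨α, hα⟩ := hnpcF y m
    have h1 := hVle α
    rw [hFyV, hFmV] at hα
    have h2 : dist y m ^ 2 ≤ 0 := by nlinarith
    have h3 : dist y m = 0 := by nlinarith [dist_nonneg (x := y) (y := m), sq_nonneg (dist y m)]
    exact dist_eq_zero.mp h3
end

section
/- Let μ1, μ2 be probability measures on R with finite second moments, μ1 atomless, with cumulative distribution functions F1, F2 and quantile functions F1^{-1}, F2^{-1}. Then the 2-Wasserstein distance satisfies d_W(μ1,μ2)^2 = ∫_0^1 (F1^{-1}(p) − F2^{-1}(p))^2 dp. -/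
open MeasureTheory Set Filter ProbabilityTheory Topology

/-- The cumulative distribution function of a measure on `ℝ`. -/
noncomputable def cdfFn (μ : Measure ℝ) (x : ℝ) : ℝ := (μ (Set.Iic x)).toReal

/-- The quantile function (generalized inverse of the cdf). -/
noncomputable def quantileFn (μ : Measure ℝ) (p : ℝ) : ℝ :=
  sInf {x : ℝ | p ≤ cdfFn μ x}

section Quantile

variable (μ : Measure ℝ) [IsProbabilityMeasure μ]

lemma quantileFn_eq (p : ℝ) : quantileFn μ p = sInf {x : ℝ | p ≤ cdf μ x} := by
  simp only [quantileFn, cdfFn, cdf_eq_real, measureReal_def]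

lemma quantile_set_nonempty {p : ℝ} (hp : p < 1) : {x : ℝ | p ≤ cdf μ x}.Nonempty := by
  have h := (tendsto_cdf_atTop μ).eventually (eventually_ge_nhds hp)
  obtain ⟨x, hx⟩ := h.exists
  exact ⟨x, hx⟩

lemma quantile_set_bddBelow {p : ℝ} (hp : 0 < p) : BddBelow {x : ℝ | p ≤ cdf μ x} := by
  have h := (tendsto_cdf_atBot μ).eventually (eventually_lt_nhds hp)
  obtain ⟨y, hy⟩ := h.exists
  refine ⟨y, fun x hx => ?_⟩
  by_contra h'
  push_neg at h'
  exact absurd (le_trans hx (monotone_cdf μ h'.le)) (not_le.mpr hy)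

lemma le_cdf_quantile {p : ℝ} (hp : p ∈ Set.Ioo (0:ℝ) 1) :
    p ≤ cdf μ (quantileFn μ p) := by
  rw [quantileFn_eq]
  set S := {x : ℝ | p ≤ cdf μ x} with hS
  have hne : S.Nonempty := quantile_set_nonempty μ hp.2
  have hbd : BddBelow S := quantile_set_bddBelow μ hp.1
  have hmem : sInf S ∈ closure S := csInf_mem_closure hne hbd
  have hsub : S ⊆ Set.Ici (sInf S) := fun x hx => csInf_le hbd hx
  have hc : ContinuousWithinAt (cdf μ) (Set.Ici (sInf S)) (sInf S) :=
    (cdf μ).right_continuous (sInf S)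
  have hc2 : ContinuousWithinAt (cdf μ) S (sInf S) := hc.mono hsub
  have hne' : (𝓝[S] (sInf S)).NeBot := mem_closure_iff_nhdsWithin_neBot.mp hmem
  exact ge_of_tendsto hc2 (eventually_nhdsWithin_of_forall (fun x hx => hx))

lemma quantile_le_iff {p : ℝ} (hp : p ∈ Set.Ioo (0:ℝ) 1) (x : ℝ) :
    quantileFn μ p ≤ x ↔ p ≤ cdf μ x := by
  constructor
  · intro h
    exact le_trans (le_cdf_quantile μ hp) (monotone_cdf μ h)
  · intro h
    rw [quantileFn_eq]
    exact csInf_le (quantile_set_bddBelow μ hp.1) h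

lemma quantile_monotoneOn : MonotoneOn (quantileFn μ) (Set.Ioo (0:ℝ) 1) := by
  intro p hp q hq hpq
  rw [quantileFn_eq, quantileFn_eq]
  exact csInf_le_csInf (quantile_set_bddBelow μ hp.1) (quantile_set_nonempty μ hq.2)
    (fun x hx => le_trans hpq hx)

end Quantile

section Push

variable (μ : Measure ℝ) [IsProbabilityMeasure μ]

lemma aemeasurable_quantile :
    AEMeasurable (quantileFn μ) (volume.restrict (Set.Ioo (0:ℝ) 1)) :=
  aemeasurable_restrict_of_monotoneOn measurableSet_Ioo (quantile_monotoneOn μ)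

instance : IsProbabilityMeasure (volume.restrict (Set.Ioo (0:ℝ) 1)) := by
  constructor
  rw [Measure.restrict_apply MeasurableSet.univ]
  simp [Real.volume_Ioo]

lemma volume_Iic_inter_Ioo {c : ℝ} (h0 : 0 ≤ c) (h1 : c ≤ 1) :
    volume (Set.Iic c ∩ Set.Ioo 0 1) = ENNReal.ofReal c := by
  rcases eq_or_lt_of_le h1 with rfl | h1
  · have : Set.Iic (1:ℝ) ∩ Set.Ioo 0 1 = Set.Ioo (0:ℝ) 1 := by
      ext t
      simp only [Set.mem_inter_iff, Set.mem_Iic, Set.mem_Ioo]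
      exact ⟨fun h => h.2, fun h => ⟨h.2.le, h⟩⟩
    rw [this]
    simp [Real.volume_Ioo]
  · have : Set.Iic c ∩ Set.Ioo 0 1 = Set.Ioc 0 c := by
      ext t
      simp only [Set.mem_inter_iff, Set.mem_Iic, Set.mem_Ioo, Set.mem_Ioc]
      exact ⟨fun h => ⟨h.2.1, h.1⟩, fun h => ⟨h.2, h.1, lt_of_le_of_lt h.2 h1⟩⟩
    rw [this, Real.volume_Ioc, sub_zero]

lemma map_quantile : (volume.restrict (Set.Ioo (0:ℝ) 1)).map (quantileFn μ) = μ := by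
  have hmeas : AEMeasurable (quantileFn μ) (volume.restrict (Set.Ioo (0:ℝ) 1)) :=
    aemeasurable_quantile μ
  have : IsProbabilityMeasure ((volume.restrict (Set.Ioo (0:ℝ) 1)).map (quantileFn μ)) :=
    Measure.isProbabilityMeasure_map hmeas
  refine Measure.ext_of_Iic _ _ (fun x => ?_)
  rw [Measure.map_apply_of_aemeasurable hmeas measurableSet_Iic,
    Measure.restrict_apply' measurableSet_Ioo]
  have hset : quantileFn μ ⁻¹' Set.Iic x ∩ Set.Ioo 0 1
      = Set.Iic (cdf μ x) ∩ Set.Ioo 0 1 := by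
    ext p
    simp only [Set.mem_inter_iff, Set.mem_preimage, Set.mem_Iic]
    exact ⟨fun ⟨h, hp⟩ => ⟨(quantile_le_iff μ hp x).mp h, hp⟩,
      fun ⟨h, hp⟩ => ⟨(quantile_le_iff μ hp x).mpr h, hp⟩⟩
  rw [hset, volume_Iic_inter_Ioo (cdf_nonneg μ x) (cdf_le_one μ x), ofReal_cdf]

end Push

section Gker

noncomputable def gker (x s : ℝ) : ℝ := (if s < x then 1 else 0) - (if s < 0 then 1 else 0)

lemma gker_nonneg_eq {x : ℝ} (hx : 0 ≤ x) :
    gker x = Set.indicator (Set.Ico 0 x) (fun _ => (1:ℝ)) := by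
  funext s
  simp only [gker, Set.indicator, Set.mem_Ico]
  split_ifs <;> simp_all <;> linarith

lemma gker_neg_eq {x : ℝ} (hx : x < 0) :
    gker x = fun s => - Set.indicator (Set.Ico x 0) (fun _ => (1:ℝ)) s := by
  funext s
  simp only [gker, Set.indicator, Set.mem_Ico]
  split_ifs <;> simp_all <;> linarith

lemma integrable_gker (x : ℝ) : Integrable (gker x) volume := by
  rcases le_or_gt 0 x with hx | hx
  · rw [gker_nonneg_eq hx, integrable_indicator_iff measurableSet_Ico]
    exact (integrableOn_const_iff).mpr (Or.inr (by simp [Real.volume_Ico]))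
  · rw [gker_neg_eq hx]
    refine Integrable.neg ?_
    rw [integrable_indicator_iff measurableSet_Ico]
    exact (integrableOn_const_iff).mpr (Or.inr (by simp [Real.volume_Ico]))

lemma integral_gker (x : ℝ) : ∫ s, gker x s = x := by
  rcases le_or_gt 0 x with hx | hx
  · rw [gker_nonneg_eq hx, integral_indicator_const _ measurableSet_Ico]
    simp [Real.volume_Ico, ENNReal.toReal_ofReal hx, hx]
  · rw [gker_neg_eq hx, integral_neg, integral_indicator_const _ measurableSet_Ico]
    simp only [measureReal_def, Real.volume_Ico, sub_zero, smul_eq_mul, mul_one]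
    rw [ENNReal.toReal_ofReal (by linarith : (0:ℝ) ≤ 0 - x)]
    ring

lemma integral_abs_gker (x : ℝ) : ∫ s, |gker x s| = |x| := by
  rcases le_or_gt 0 x with hx | hx
  · have : (fun s => |gker x s|) = gker x := by
      funext s
      rw [gker_nonneg_eq hx]
      exact abs_of_nonneg (Set.indicator_nonneg (fun _ _ => by norm_num) s)
    rw [this, integral_gker, abs_of_nonneg hx]
  · have : (fun s => |gker x s|) = Set.indicator (Set.Ico x 0) (fun _ => (1:ℝ)) := by
      funext s
      rw [gker_neg_eq hx, abs_neg]
      exact abs_of_nonneg (Set.indicator_nonneg (fun _ _ => by norm_num) s)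
    rw [this, integral_indicator_const _ measurableSet_Ico]
    simp only [measureReal_def, Real.volume_Ico, sub_zero, smul_eq_mul, mul_one]
    rw [ENNReal.toReal_ofReal (by linarith : (0:ℝ) ≤ 0 - x), abs_of_neg hx]
    ring

lemma measurable_gker2 : Measurable (fun q : ℝ × ℝ => gker q.1 q.2) := by
  unfold gker
  exact ((Measurable.ite (measurableSet_lt measurable_snd measurable_fst)
    measurable_const measurable_const).sub
    (Measurable.ite (measurableSet_lt measurable_snd measurable_const)
    measurable_const measurable_const))

lemma integral_gker_prod (x y : ℝ) :
    ∫ w : ℝ × ℝ, gker x w.1 * gker y w.2 = x * y := by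
  rw [Measure.volume_eq_prod, integral_prod_mul, integral_gker, integral_gker]

lemma integral_abs_gker_prod (x y : ℝ) :
    ∫ w : ℝ × ℝ, |gker x w.1 * gker y w.2| = |x| * |y| := by
  rw [Measure.volume_eq_prod]
  have h : ∫ w : ℝ × ℝ, |gker x w.1 * gker y w.2| ∂((volume : Measure ℝ).prod volume)
      = (∫ s, |gker x s|) * ∫ t, |gker y t| := by
    simp_rw [abs_mul]
    exact integral_prod_mul (fun a => |gker x a|) (fun b => |gker y b|)
  rw [h, integral_abs_gker, integral_abs_gker]

lemma integrable_gker_prod (x y : ℝ) :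
    Integrable (fun w : ℝ × ℝ => gker x w.1 * gker y w.2) volume := by
  rw [Measure.volume_eq_prod]
  exact (integrable_gker x).mul_prod (integrable_gker y)

end Gker

section Coupling

/-- Inner Hoeffding function of a coupling. -/
noncomputable def Jfun (π : Measure (ℝ × ℝ)) (w : ℝ × ℝ) : ℝ :=
  ∫ z, gker z.1 w.1 * gker z.2 w.2 ∂π

/-- Marginal part of the Hoeffding decomposition. -/
noncomputable def Cfun (μ1 μ2 : Measure ℝ) (w : ℝ × ℝ) : ℝ :=
  (1 - (μ1 (Set.Iic w.1)).toReal - (μ2 (Set.Iic w.2)).toReal)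
  - (if w.2 < 0 then 1 else 0) * (μ1 (Set.Ioi w.1)).toReal
  - (if w.1 < 0 then 1 else 0) * (μ2 (Set.Ioi w.2)).toReal
  + (if w.1 < 0 then 1 else 0) * (if w.2 < 0 then 1 else 0)

variable {μ1 μ2 : Measure ℝ} [IsProbabilityMeasure μ1] [IsProbabilityMeasure μ2]
  {π : Measure (ℝ × ℝ)} [IsProbabilityMeasure π]

lemma Jfun_eq (hπ1 : π.map Prod.fst = μ1) (hπ2 : π.map Prod.snd = μ2) (w : ℝ × ℝ) :
    Jfun π w = (π (Set.Iic w.1 ×ˢ Set.Iic w.2)).toReal + Cfun μ1 μ2 w := by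
  obtain ⟨s, t⟩ := w
  set A' : Set (ℝ × ℝ) := Prod.fst ⁻¹' Set.Ioi s with hA'
  set B' : Set (ℝ × ℝ) := Prod.snd ⁻¹' Set.Ioi t with hB'
  have hA'm : MeasurableSet A' := measurableSet_Ioi.preimage measurable_fst
  have hB'm : MeasurableSet B' := measurableSet_Ioi.preimage measurable_snd
  have e : ∀ z : ℝ × ℝ, gker z.1 s * gker z.2 t =
      Set.indicator (A' ∩ B') (fun _ => (1:ℝ)) z
      - (if t < 0 then 1 else 0) * Set.indicator A' (fun _ => (1:ℝ)) z
      - (if s < 0 then 1 else 0) * Set.indicator B' (fun _ => (1:ℝ)) z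
      + (if s < 0 then 1 else 0) * (if t < 0 then 1 else 0) := by
    intro z
    simp only [gker, Set.indicator, Set.mem_inter_iff, hA', hB', Set.mem_preimage,
      Set.mem_Ioi]
    split_ifs <;> simp_all <;> ring
  have i1 : Integrable (Set.indicator (A' ∩ B') (fun _ => (1:ℝ))) π :=
    (integrable_const (1:ℝ)).indicator (hA'm.inter hB'm)
  have i2 : Integrable (Set.indicator A' (fun _ => (1:ℝ))) π :=
    (integrable_const (1:ℝ)).indicator hA'm
  have i3 : Integrable (Set.indicator B' (fun _ => (1:ℝ))) π :=
    (integrable_const (1:ℝ)).indicator hB'm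
  have key : Jfun π (s, t) = (π (A' ∩ B')).toReal
      - (if t < 0 then 1 else 0) * (π A').toReal
      - (if s < 0 then 1 else 0) * (π B').toReal
      + (if s < 0 then 1 else 0) * (if t < 0 then 1 else 0) := by
    unfold Jfun
    rw [show (fun z : ℝ × ℝ => gker z.1 s * gker z.2 t) = fun z =>
      (Set.indicator (A' ∩ B') (fun _ => (1:ℝ)) z
      - (if t < 0 then 1 else 0) * Set.indicator A' (fun _ => (1:ℝ)) z
      - (if s < 0 then 1 else 0) * Set.indicator B' (fun _ => (1:ℝ)) z)
      + (if s < 0 then 1 else 0) * (if t < 0 then 1 else 0) from funext e]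
    have j2 : Integrable (fun z : ℝ × ℝ =>
        (if t < 0 then (1:ℝ) else 0) * Set.indicator A' (fun _ => (1:ℝ)) z) π :=
      i2.const_mul _
    have j3 : Integrable (fun z : ℝ × ℝ =>
        (if s < 0 then (1:ℝ) else 0) * Set.indicator B' (fun _ => (1:ℝ)) z) π :=
      i3.const_mul _
    have j12 : Integrable (fun z : ℝ × ℝ =>
        Set.indicator (A' ∩ B') (fun _ => (1:ℝ)) z
        - (if t < 0 then (1:ℝ) else 0) * Set.indicator A' (fun _ => (1:ℝ)) z) π :=
      i1.sub j2
    have j123 : Integrable (fun z : ℝ × ℝ =>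
        Set.indicator (A' ∩ B') (fun _ => (1:ℝ)) z
        - (if t < 0 then (1:ℝ) else 0) * Set.indicator A' (fun _ => (1:ℝ)) z
        - (if s < 0 then (1:ℝ) else 0) * Set.indicator B' (fun _ => (1:ℝ)) z) π :=
      j12.sub j3
    rw [integral_add j123 (integrable_const _),
      integral_sub j12 j3,
      integral_sub i1 j2, MeasureTheory.integral_const_mul, MeasureTheory.integral_const_mul,
      integral_indicator_const _ (hA'm.inter hB'm), integral_indicator_const _ hA'm,
      integral_indicator_const _ hB'm, integral_const]
    simp [measureReal_def]
  -- marginals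
  have hπA' : π A' = μ1 (Set.Ioi s) := by
    rw [← hπ1, Measure.map_apply measurable_fst measurableSet_Ioi]
  have hπB' : π B' = μ2 (Set.Ioi t) := by
    rw [← hπ2, Measure.map_apply measurable_snd measurableSet_Ioi]
  -- inclusion-exclusion
  set A : Set (ℝ × ℝ) := Prod.fst ⁻¹' Set.Iic s with hA
  set B : Set (ℝ × ℝ) := Prod.snd ⁻¹' Set.Iic t with hB
  have hAm : MeasurableSet A := measurableSet_Iic.preimage measurable_fst
  have hBm : MeasurableSet B := measurableSet_Iic.preimage measurable_snd
  have hcompl : A' ∩ B' = (A ∪ B)ᶜ := by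
    ext z
    simp only [hA', hB', hA, hB, Set.mem_inter_iff, Set.mem_preimage, Set.mem_Ioi,
      Set.mem_compl_iff, Set.mem_union, Set.mem_Iic, not_or, not_le]
  have hABprod : A ∩ B = Set.Iic s ×ˢ Set.Iic t := by
    rw [Set.prod_eq]
  have hπA : π A = μ1 (Set.Iic s) := by
    rw [← hπ1, Measure.map_apply measurable_fst measurableSet_Iic]
  have hπB : π B = μ2 (Set.Iic t) := by
    rw [← hπ2, Measure.map_apply measurable_snd measurableSet_Iic]
  have hIE : (π (A ∪ B)).toReal + (π (A ∩ B)).toReal = (π A).toReal + (π B).toReal := by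
    rw [← ENNReal.toReal_add (measure_ne_top π _) (measure_ne_top π _),
      ← ENNReal.toReal_add (measure_ne_top π _) (measure_ne_top π _),
      measure_union_add_inter' hAm B]
  have hcompl2 : (π (A ∪ B)).toReal + (π ((A ∪ B)ᶜ)).toReal = 1 := by
    rw [← ENNReal.toReal_add (measure_ne_top π _) (measure_ne_top π _),
      measure_add_measure_compl (hAm.union hBm)]
    simp
  rw [key, hcompl, hπA', hπB']
  rw [← hABprod]
  unfold Cfun
  simp only
  rw [← hπA, ← hπB]
  linarith [hcompl2, hIE]

end Coupling

section Fubini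

variable {μ1 μ2 : Measure ℝ} [IsProbabilityMeasure μ1] [IsProbabilityMeasure μ2]
  {π : Measure (ℝ × ℝ)} [IsProbabilityMeasure π]

lemma integrable_fst_sq (hπ1 : π.map Prod.fst = μ1)
    (h1 : Integrable (fun x : ℝ => x ^ 2) μ1) :
    Integrable (fun z : ℝ × ℝ => z.1 ^ 2) π := by
  rw [← hπ1] at h1
  exact (integrable_map_measure (f := Prod.fst) (g := fun x : ℝ => x ^ 2)
    (by fun_prop) measurable_fst.aemeasurable).mp h1

lemma integrable_snd_sq (hπ2 : π.map Prod.snd = μ2)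
    (h2 : Integrable (fun x : ℝ => x ^ 2) μ2) :
    Integrable (fun z : ℝ × ℝ => z.2 ^ 2) π := by
  rw [← hπ2] at h2
  exact (integrable_map_measure (f := Prod.snd) (g := fun x : ℝ => x ^ 2)
    (by fun_prop) measurable_snd.aemeasurable).mp h2

lemma integrable_abs_mul (hπ1 : π.map Prod.fst = μ1) (hπ2 : π.map Prod.snd = μ2)
    (h1 : Integrable (fun x : ℝ => x ^ 2) μ1) (h2 : Integrable (fun x : ℝ => x ^ 2) μ2) :
    Integrable (fun z : ℝ × ℝ => |z.1| * |z.2|) π := by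
  have ha := integrable_fst_sq hπ1 h1
  have hb := integrable_snd_sq hπ2 h2
  refine Integrable.mono' ((ha.add hb).div_const 2) ((measurable_fst.abs.mul measurable_snd.abs).aestronglyMeasurable) ?_
  refine Filter.Eventually.of_forall (fun z => ?_)
  have h : |z.1| * |z.2| ≤ (z.1 ^ 2 + z.2 ^ 2) / 2 := by
    nlinarith [sq_nonneg (|z.1| - |z.2|), sq_abs z.1, sq_abs z.2]
  rw [Real.norm_eq_abs, abs_of_nonneg (by positivity)]
  exact h

lemma integrable_mul (hπ1 : π.map Prod.fst = μ1) (hπ2 : π.map Prod.snd = μ2)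
    (h1 : Integrable (fun x : ℝ => x ^ 2) μ1) (h2 : Integrable (fun x : ℝ => x ^ 2) μ2) :
    Integrable (fun z : ℝ × ℝ => z.1 * z.2) π := by
  refine (integrable_abs_mul hπ1 hπ2 h1 h2).mono' (by fun_prop) ?_
  refine Filter.Eventually.of_forall (fun z => ?_)
  rw [Real.norm_eq_abs, abs_mul]

lemma integrable_phi (hπ1 : π.map Prod.fst = μ1) (hπ2 : π.map Prod.snd = μ2)
    (h1 : Integrable (fun x : ℝ => x ^ 2) μ1) (h2 : Integrable (fun x : ℝ => x ^ 2) μ2) :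
    Integrable (fun q : (ℝ × ℝ) × (ℝ × ℝ) => gker q.1.1 q.2.1 * gker q.1.2 q.2.2)
      (π.prod volume) := by
  have hmeas : AEStronglyMeasurable
      (fun q : (ℝ × ℝ) × (ℝ × ℝ) => gker q.1.1 q.2.1 * gker q.1.2 q.2.2)
      (π.prod volume) := by
    apply Measurable.aestronglyMeasurable
    exact ((measurable_gker2.comp ((measurable_fst.fst).prodMk (measurable_snd.fst))).mul
      (measurable_gker2.comp ((measurable_fst.snd).prodMk (measurable_snd.snd))))
  rw [integrable_prod_iff hmeas]
  constructor
  · exact Filter.Eventually.of_forall (fun z => integrable_gker_prod z.1 z.2)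
  · have : (fun z : ℝ × ℝ => ∫ w : ℝ × ℝ, ‖gker z.1 w.1 * gker z.2 w.2‖)
        = fun z : ℝ × ℝ => |z.1| * |z.2| := by
      funext z
      simp_rw [Real.norm_eq_abs]
      exact integral_abs_gker_prod z.1 z.2
    rw [this]
    exact integrable_abs_mul hπ1 hπ2 h1 h2

lemma integrable_Jfun (hπ1 : π.map Prod.fst = μ1) (hπ2 : π.map Prod.snd = μ2)
    (h1 : Integrable (fun x : ℝ => x ^ 2) μ1) (h2 : Integrable (fun x : ℝ => x ^ 2) μ2) :
    Integrable (Jfun π) (volume : Measure (ℝ × ℝ)) := by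
  have h := (integrable_phi hπ1 hπ2 h1 h2).integral_prod_right
  exact h

lemma integral_mul_eq_integral_Jfun (hπ1 : π.map Prod.fst = μ1) (hπ2 : π.map Prod.snd = μ2)
    (h1 : Integrable (fun x : ℝ => x ^ 2) μ1) (h2 : Integrable (fun x : ℝ => x ^ 2) μ2) :
    ∫ z, z.1 * z.2 ∂π = ∫ w : ℝ × ℝ, Jfun π w := by
  have hswap := integral_integral_swap
    (f := fun (z : ℝ × ℝ) (w : ℝ × ℝ) => gker z.1 w.1 * gker z.2 w.2)
    (μ := π) (ν := volume) (integrable_phi hπ1 hπ2 h1 h2)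
  calc ∫ z, z.1 * z.2 ∂π
      = ∫ z : ℝ × ℝ, (∫ w : ℝ × ℝ, gker z.1 w.1 * gker z.2 w.2) ∂π :=
        integral_congr_ae (Filter.Eventually.of_forall fun (z : ℝ × ℝ) =>
          (integral_gker_prod z.1 z.2).symm)
    _ = ∫ w : ℝ × ℝ, (∫ z : ℝ × ℝ, gker z.1 w.1 * gker z.2 w.2 ∂π) := by simpa using hswap
    _ = ∫ w : ℝ × ℝ, Jfun π w := rfl

end Fubini

section Final

variable (μ1 μ2 : Measure ℝ) [IsProbabilityMeasure μ1] [IsProbabilityMeasure μ2]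

/-- The monotone (quantile) coupling. -/
noncomputable def monoCoupling (μ1 μ2 : Measure ℝ) : Measure (ℝ × ℝ) :=
  (volume.restrict (Set.Ioo (0:ℝ) 1)).map
    (fun p => (quantileFn μ1 p, quantileFn μ2 p))

lemma aemeasurable_T :
    AEMeasurable (fun p => (quantileFn μ1 p, quantileFn μ2 p))
      (volume.restrict (Set.Ioo (0:ℝ) 1)) :=
  (aemeasurable_quantile μ1).prodMk (aemeasurable_quantile μ2)

instance : IsProbabilityMeasure (monoCoupling μ1 μ2) :=
  Measure.isProbabilityMeasure_map (aemeasurable_T μ1 μ2)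

lemma monoCoupling_fst : (monoCoupling μ1 μ2).map Prod.fst = μ1 := by
  unfold monoCoupling
  rw [AEMeasurable.map_map_of_aemeasurable measurable_fst.aemeasurable (aemeasurable_T μ1 μ2)]
  exact map_quantile μ1

lemma monoCoupling_snd : (monoCoupling μ1 μ2).map Prod.snd = μ2 := by
  unfold monoCoupling
  rw [AEMeasurable.map_map_of_aemeasurable measurable_snd.aemeasurable (aemeasurable_T μ1 μ2)]
  exact map_quantile μ2

lemma monoCoupling_apply_Iic (s t : ℝ) :
    monoCoupling μ1 μ2 (Set.Iic s ×ˢ Set.Iic t)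
      = ENNReal.ofReal (min (ProbabilityTheory.cdf μ1 s) (ProbabilityTheory.cdf μ2 t)) := by
  unfold monoCoupling
  rw [Measure.map_apply_of_aemeasurable (aemeasurable_T μ1 μ2)
    (measurableSet_Iic.prod measurableSet_Iic),
    Measure.restrict_apply' measurableSet_Ioo]
  have hset : (fun p => (quantileFn μ1 p, quantileFn μ2 p)) ⁻¹' (Set.Iic s ×ˢ Set.Iic t)
      ∩ Set.Ioo 0 1
      = Set.Iic (min (ProbabilityTheory.cdf μ1 s) (ProbabilityTheory.cdf μ2 t))
        ∩ Set.Ioo 0 1 := by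
    ext p
    simp only [Set.mem_inter_iff, Set.mem_preimage, Set.mem_prod, Set.mem_Iic, le_min_iff]
    constructor
    · rintro ⟨⟨h1, h2⟩, hp⟩
      exact ⟨⟨(quantile_le_iff μ1 hp s).mp h1, (quantile_le_iff μ2 hp t).mp h2⟩, hp⟩
    · rintro ⟨⟨h1, h2⟩, hp⟩
      exact ⟨⟨(quantile_le_iff μ1 hp s).mpr h1, (quantile_le_iff μ2 hp t).mpr h2⟩, hp⟩
  rw [hset]
  exact volume_Iic_inter_Ioo
    (le_min (cdf_nonneg μ1 s) (cdf_nonneg μ2 t))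
    (le_trans (min_le_left _ _) (cdf_le_one μ1 s))

lemma coupling_apply_le {π : Measure (ℝ × ℝ)} [IsProbabilityMeasure π]
    (hπ1 : π.map Prod.fst = μ1) (hπ2 : π.map Prod.snd = μ2) (s t : ℝ) :
    π (Set.Iic s ×ˢ Set.Iic t) ≤ monoCoupling μ1 μ2 (Set.Iic s ×ˢ Set.Iic t) := by
  rw [monoCoupling_apply_Iic]
  have hle1 : π (Set.Iic s ×ˢ Set.Iic t) ≤ ENNReal.ofReal (ProbabilityTheory.cdf μ1 s) := by
    rw [ProbabilityTheory.ofReal_cdf, ← hπ1,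
      Measure.map_apply measurable_fst measurableSet_Iic]
    exact measure_mono (fun z hz => hz.1)
  have hle2 : π (Set.Iic s ×ˢ Set.Iic t) ≤ ENNReal.ofReal (ProbabilityTheory.cdf μ2 t) := by
    rw [ProbabilityTheory.ofReal_cdf, ← hπ2,
      Measure.map_apply measurable_snd measurableSet_Iic]
    exact measure_mono (fun z hz => hz.2)
  rcases min_cases (ProbabilityTheory.cdf μ1 s) (ProbabilityTheory.cdf μ2 t) with
    ⟨h, _⟩ | ⟨h, _⟩ <;> rw [h]
  · exact hle1
  · exact hle2

lemma Jfun_le_mono {π : Measure (ℝ × ℝ)} [IsProbabilityMeasure π]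
    (hπ1 : π.map Prod.fst = μ1) (hπ2 : π.map Prod.snd = μ2) (w : ℝ × ℝ) :
    Jfun π w ≤ Jfun (monoCoupling μ1 μ2) w := by
  rw [Jfun_eq hπ1 hπ2 w, Jfun_eq (monoCoupling_fst μ1 μ2) (monoCoupling_snd μ1 μ2) w]
  have h := coupling_apply_le μ1 μ2 hπ1 hπ2 w.1 w.2
  have := ENNReal.toReal_le_toReal (measure_ne_top π _) (measure_ne_top _ _) |>.mpr h
  linarith

lemma cost_expand {π : Measure (ℝ × ℝ)} [IsProbabilityMeasure π]
    (hπ1 : π.map Prod.fst = μ1) (hπ2 : π.map Prod.snd = μ2)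
    (h1 : Integrable (fun x : ℝ => x ^ 2) μ1) (h2 : Integrable (fun x : ℝ => x ^ 2) μ2) :
    ∫ z, (z.1 - z.2) ^ 2 ∂π
      = (∫ x, x ^ 2 ∂μ1) + (∫ x, x ^ 2 ∂μ2) - 2 * ∫ z, z.1 * z.2 ∂π := by
  have ia := integrable_fst_sq hπ1 h1
  have ib := integrable_snd_sq hπ2 h2
  have iab := integrable_mul hπ1 hπ2 h1 h2
  have iA : Integrable (fun z : ℝ × ℝ => z.1 ^ 2 + z.2 ^ 2) π := ia.add ib
  have iB : Integrable (fun z : ℝ × ℝ => 2 * (z.1 * z.2)) π := iab.const_mul 2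
  have e : (fun z : ℝ × ℝ => (z.1 - z.2) ^ 2)
      = fun z : ℝ × ℝ => (z.1 ^ 2 + z.2 ^ 2) - 2 * (z.1 * z.2) :=
    funext fun z => by ring
  rw [e, integral_sub iA iB, integral_add ia ib, MeasureTheory.integral_const_mul]
  have m1 : ∫ z : ℝ × ℝ, z.1 ^ 2 ∂π = ∫ x, x ^ 2 ∂μ1 := by
    rw [← hπ1, integral_map measurable_fst.aemeasurable (by fun_prop)]
  have m2 : ∫ z : ℝ × ℝ, z.2 ^ 2 ∂π = ∫ x, x ^ 2 ∂μ2 := by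
    rw [← hπ2, integral_map measurable_snd.aemeasurable (by fun_prop)]
  rw [m1, m2]

end Final


/-- The squared 2-Wasserstein distance: infimum of `∫ (x−y)² dπ` over couplings
`π` of `μ1` and `μ2`. -/
noncomputable def wassersteinSq (μ1 μ2 : Measure ℝ) : ℝ :=
  sInf {r : ℝ | ∃ π : Measure (ℝ × ℝ), IsProbabilityMeasure π ∧
    π.map Prod.fst = μ1 ∧ π.map Prod.snd = μ2 ∧
    r = ∫ z, (z.1 - z.2) ^ 2 ∂π}

/-- Quantile representation of the 2-Wasserstein distance on `ℝ`:
`d_W(μ1,μ2)² = ∫₀¹ (F₁⁻¹(p) − F₂⁻¹(p))² dp`. -/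
theorem wasserstein_eq_quantile_integral (μ1 μ2 : Measure ℝ)
    [IsProbabilityMeasure μ1] [IsProbabilityMeasure μ2] [NullSingletonClass μ1]
    (h1 : Integrable (fun x : ℝ => x ^ 2) μ1)
    (h2 : Integrable (fun x : ℝ => x ^ 2) μ2) :
    wassersteinSq μ1 μ2 =
      ∫ p in Set.Ioo (0 : ℝ) 1, (quantileFn μ1 p - quantileFn μ2 p) ^ 2 := by
  have hm1 := monoCoupling_fst μ1 μ2
  have hm2 := monoCoupling_snd μ1 μ2
  have hcost_m : ∫ z, (z.1 - z.2) ^ 2 ∂(monoCoupling μ1 μ2)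
      = ∫ p in Set.Ioo (0:ℝ) 1, (quantileFn μ1 p - quantileFn μ2 p) ^ 2 := by
    unfold monoCoupling
    rw [integral_map (aemeasurable_T μ1 μ2) (Continuous.aestronglyMeasurable (by continuity))]
  unfold wassersteinSq
  have hmem : (∫ z, (z.1 - z.2) ^ 2 ∂(monoCoupling μ1 μ2)) ∈
      {r : ℝ | ∃ π : Measure (ℝ × ℝ), IsProbabilityMeasure π ∧
        π.map Prod.fst = μ1 ∧ π.map Prod.snd = μ2 ∧
        r = ∫ z, (z.1 - z.2) ^ 2 ∂π} :=
    ⟨monoCoupling μ1 μ2, inferInstance, hm1, hm2, rfl⟩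
  have hbdd : BddBelow {r : ℝ | ∃ π : Measure (ℝ × ℝ), IsProbabilityMeasure π ∧
      π.map Prod.fst = μ1 ∧ π.map Prod.snd = μ2 ∧
      r = ∫ z, (z.1 - z.2) ^ 2 ∂π} := by
    refine ⟨0, ?_⟩
    rintro r ⟨π, hπ, _, _, rfl⟩
    exact integral_nonneg fun z => sq_nonneg _
  refine le_antisymm ?_ ?_
  · rw [← hcost_m]
    exact csInf_le hbdd hmem
  · refine le_csInf ⟨_, hmem⟩ ?_
    rintro r ⟨π, hπ, hπ1, hπ2, rfl⟩
    haveI := hπ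
    rw [← hcost_m, cost_expand μ1 μ2 hπ1 hπ2 h1 h2, cost_expand μ1 μ2 hm1 hm2 h1 h2]
    have hmono : ∫ z, z.1 * z.2 ∂π ≤ ∫ z, z.1 * z.2 ∂(monoCoupling μ1 μ2) := by
      rw [integral_mul_eq_integral_Jfun hπ1 hπ2 h1 h2,
        integral_mul_eq_integral_Jfun hm1 hm2 h1 h2]
      exact integral_mono (integrable_Jfun hπ1 hπ2 h1 h2)
        (integrable_Jfun hm1 hm2 h1 h2) (Jfun_le_mono μ1 μ2 hπ1 hπ2)
    linarith
end
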